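/- arXiv:1606.06158 — 2 statements merged into one kernel-verified Lean document; each statement's English description precedes it below -/
import Mathlib

section
/- Let H be a complex Hilbert space, T a bounded linear operator on H, and λ ∈ (0,1). Then r(T) = inf { w(Δ_λ(X T X⁻¹)) : X a bounded invertible operator on H }, where w(S) = sup { |⟨S x, x⟩| : x ∈ H, ‖x‖ = 1 } is the numerical radius, and Δ_λ(X T X⁻¹) denotes |S|^λ V |S|^{1-λ} with S = X T X⁻¹ and V any partial isometry satisfying ker V = ker S and S = V|S|. -/
/-!
For invertible `X` put `S = X T X⁻¹ = V|S|`. Since `r(ab) = r(ba)`, the Aluthge transform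
`|S|^λ (V |S|^(1-λ))` has the spectral radius of `V |S|^(1-λ) |S|^λ = S`, i.e. of `T`; and the
spectral radius never exceeds the numerical radius, because `z - A` is coercive
(`|⟨(z - A)x, x⟩| ≥ (|z| - w(A)) ‖x‖²`), hence invertible, as soon as `|z| > w(A)`.
Conversely `w(Δ_λ(S)) ≤ ‖Δ_λ(S)‖ ≤ ‖S‖`, and by Rota's theorem `‖X T X⁻¹‖` can be pushed below
any `c > r(T)`: the series `R = ∑ c^(-2n) (Tⁿ)* Tⁿ` converges by Gelfand's formula, `R ≥ 1` and
`T* R T ≤ c² R`, so `X = R^(1/2)` works.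
-/

open ContinuousLinearMap Filter

variable {H : Type*} [NormedAddCommGroup H] [InnerProductSpace ℂ H] [CompleteSpace H]

/-- The modulus `|S| = (S*S)^(1/2)` of a bounded operator on a Hilbert space. -/
noncomputable def oMod (S : H →L[ℂ] H) : H →L[ℂ] H :=
  CFC.sqrt (ContinuousLinearMap.adjoint S * S)

/-- Real powers of a (positive) operator, via the continuous functional calculus. -/
noncomputable def oPow (S : H →L[ℂ] H) (r : ℝ) : H →L[ℂ] H :=
  cfc (fun x : ℝ => x ^ r) S

/-- `V` is a partial isometry: it is isometric on the orthogonal complement of its kernel. -/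
def IsPartialIsometry (V : H →L[ℂ] H) : Prop :=
  ∀ x ∈ (LinearMap.ker (V : H →ₗ[ℂ] H))ᗮ, ‖V x‖ = ‖x‖

/-- `V` implements the polar decomposition of `S`: it is a partial isometry with
`ker V = ker S` and `S = V * |S|`. -/
def IsPolarDecomp (S V : H →L[ℂ] H) : Prop :=
  IsPartialIsometry V ∧ LinearMap.ker (V : H →ₗ[ℂ] H) = LinearMap.ker (S : H →ₗ[ℂ] H) ∧ S = V * oMod S

/-- The λ-Aluthge transform `|S|^λ V |S|^(1-λ)` of `S`, computed from a
partial isometry `V` in a polar decomposition `S = V|S|`. -/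
noncomputable def aluthge (l : ℝ) (S V : H →L[ℂ] H) : H →L[ℂ] H :=
  oPow (oMod S) l * V * oPow (oMod S) (1 - l)

/-- `S` is a sequence of iterated λ-Aluthge transforms: each `S (m+1)` is the λ-Aluthge
transform of `S m` computed from some polar decomposition of `S m`. -/
def IsAluthgeSeq (l : ℝ) (S : ℕ → H →L[ℂ] H) : Prop :=
  ∀ m, ∃ V : H →L[ℂ] H, IsPolarDecomp (S m) V ∧ S (m + 1) = aluthge l (S m) V

/-- The numerical radius `w(S) = sup { |⟨Sx, x⟩| : ‖x‖ = 1 }`. -/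
noncomputable def numRadius (S : H →L[ℂ] H) : ℝ :=
  sSup {r : ℝ | ∃ x : H, ‖x‖ = 1 ∧ r = ‖(inner ℂ (S x) x : ℂ)‖}

/-- The real part `Re(S) = (S + S*)/2` of a bounded operator. -/
noncomputable def reOp (S : H →L[ℂ] H) : H →L[ℂ] H :=
  (2 : ℂ)⁻¹ • (S + ContinuousLinearMap.adjoint S)

open scoped NNReal ENNReal InnerProductSpace

theorem spectralRadius_mul_comm {𝕜 A : Type*} [NormedField 𝕜] [Ring A] [Algebra 𝕜 A]
    (a b : A) : spectralRadius 𝕜 (a * b) = spectralRadius 𝕜 (b * a) := by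
  suffices ∀ c d : A, spectralRadius 𝕜 (c * d) ≤ spectralRadius 𝕜 (d * c) from
    (this a b).antisymm (this b a)
  intro c d
  refine iSup₂_le fun z hz => ?_
  rcases eq_or_ne z 0 with rfl | hz0
  · simp
  · have hz' : z ∈ spectrum 𝕜 (d * c) \ {0} := by
      rw [← spectrum.nonzero_mul_comm]; exact ⟨hz, hz0⟩
    exact le_iSup₂ (f := fun z (_ : z ∈ spectrum 𝕜 (d * c)) => (‖z‖₊ : ℝ≥0∞)) z hz'.1

theorem eventually_norm_pow_le_of_spectralRadius_lt {A : Type*} [NormedRing A]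
    [NormedAlgebra ℂ A] [CompleteSpace A] {a : A} {q : ℝ≥0} (h : spectralRadius ℂ a < q) :
    ∀ᶠ n in atTop, ‖a ^ n‖ ≤ q ^ n := by
  filter_upwards
    [(spectrum.pow_nnnorm_pow_one_div_tendsto_nhds_spectralRadius a).eventually_lt_const h,
      eventually_ne_atTop 0] with n hn hn0
  have := ENNReal.rpow_le_rpow hn.le (show (0 : ℝ) ≤ n by positivity)
  rw [← ENNReal.rpow_mul, one_div_mul_cancel (by positivity), ENNReal.rpow_one,
    ENNReal.rpow_natCast] at this
  exact_mod_cast this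

section CStarAlgebra

variable {A : Type*} [CStarAlgebra A] [PartialOrder A] [StarOrderedRing A]

theorem exists_one_le_star_mul_mul_eq_sub_one {a : A} (h : Summable fun n => ‖a ^ n‖ ^ 2) :
    ∃ R : A, 1 ≤ R ∧ star a * R * a = R - 1 := by
  set f : ℕ → A := fun n => star (a ^ n) * a ^ n
  have hf : HasSum f (∑' n, f n) := by
    refine (Summable.of_norm (h.congr fun n => ?_)).hasSum
    simp only [f]; rw [CStarRing.norm_star_mul_self, sq]
  refine ⟨∑' n, f n, by simpa [f] using le_hasSum hf 0 fun n _ => star_mul_self_nonneg _, ?_⟩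
  have hstep : (fun n => star a * f n * a) = fun n => f (n + 1) := by
    ext n; simp only [f, pow_succ, star_mul, mul_assoc]
  have htail := (hasSum_nat_add_iff' 1).mpr hf
  rw [Finset.sum_range_one, ← hstep] at htail
  simpa [f] using (hf.mul_left (star a) |>.mul_right a).unique htail

/-- `a` is a contraction for the equivalent norm `‖R^(1/2) ·‖`. -/
theorem exists_units_norm_conj_le_one_of_star_mul_mul_le {a R : A} (hR : IsStrictlyPositive R)
    (haR : star a * R * a ≤ R) : ∃ u : Aˣ, ‖(u : A) * a * ↑u⁻¹‖ ≤ 1 := by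
  obtain ⟨u, hu⟩ := hR.isUnit_cfcSqrt
  have hu_sa : star (u : A) = u := by rw [hu]; exact (CFC.sqrt_nonneg R).isSelfAdjoint.star_eq
  have hu_inv_sa : star (↑u⁻¹ : A) = ↑u⁻¹ := by
    rw [← Units.coe_star_inv, show star u = u from Units.ext hu_sa]
  have huu : (u : A) * u = R := by rw [hu]; exact CFC.sqrt_mul_sqrt_self R hR.nonneg
  refine ⟨u, ?_⟩
  set b := (u : A) * a * ↑u⁻¹
  have hbb : star b * b ≤ 1 :=
    calc star b * b = star (↑u⁻¹ : A) * (star a * R * a) * ↑u⁻¹ := by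
          simp only [b, star_mul, hu_sa, hu_inv_sa, ← huu]; noncomm_ring
      _ ≤ star (↑u⁻¹ : A) * R * ↑u⁻¹ := star_left_conjugate_le_conjugate haR _
      _ = 1 := by rw [hu_inv_sa, ← huu]; simp [← mul_assoc]
  have := (CStarAlgebra.norm_le_one_iff_of_nonneg _ (star_mul_self_nonneg b)).mpr hbb
  rw [CStarRing.norm_star_mul_self] at this
  nlinarith [norm_nonneg b]

theorem exists_units_norm_conj_le {a : A} {c : ℝ} (h : spectralRadius ℂ a < ENNReal.ofReal c) :
    ∃ u : Aˣ, ‖(u : A) * a * ↑u⁻¹‖ ≤ c := by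
  obtain ⟨q, hq, hqc⟩ := ENNReal.lt_iff_exists_nnreal_btwn.mp h
  have hqc' : (q : ℝ) < c := by
    simpa using (ENNReal.lt_ofReal_iff_toReal_lt ENNReal.coe_ne_top).mp hqc
  have hc : 0 < c := q.2.trans_lt hqc'
  set b := (c⁻¹ : ℂ) • a
  have hb : Summable fun n => ‖b ^ n‖ ^ 2 := by
    refine Summable.of_norm_bounded_eventually_nat
      (summable_geometric_of_lt_one (by positivity) (?_ : ((q : ℝ) / c) ^ 2 < 1)) ?_
    · exact pow_lt_one₀ (by positivity) ((div_lt_one hc).mpr hqc') two_ne_zero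
    filter_upwards [eventually_norm_pow_le_of_spectralRadius_lt hq] with n hn
    have hbn : ‖b ^ n‖ = (c ^ n)⁻¹ * ‖a ^ n‖ := by
      simp [b, smul_pow, norm_smul, abs_of_pos hc]
    calc ‖‖b ^ n‖ ^ 2‖ = ((c ^ n)⁻¹ * ‖a ^ n‖) ^ 2 := by rw [norm_pow, norm_norm, hbn]
      _ ≤ ((c ^ n)⁻¹ * q ^ n) ^ 2 := by gcongr
      _ = ((q / c) ^ 2) ^ n := by ring
  obtain ⟨R, hR, hbR⟩ := exists_one_le_star_mul_mul_eq_sub_one hb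
  obtain ⟨u, hu⟩ := exists_units_norm_conj_le_one_of_star_mul_mul_le
    (isStrictlyPositive_one.of_le hR) (hbR ▸ sub_le_self R zero_le_one)
  refine ⟨u, ?_⟩
  have : (u : A) * b * ↑u⁻¹ = (c⁻¹ : ℂ) • ((u : A) * a * ↑u⁻¹) := by simp [b]
  rwa [this, norm_smul, norm_inv, Complex.norm_real, Real.norm_of_nonneg hc.le,
    inv_mul_le_iff₀ hc, mul_one] at hu

end CStarAlgebra

theorem LinearMap.exists_linearIsometry_range_comp {𝕜 E F G : Type*} [NormedField 𝕜]
    [AddCommGroup E] [Module 𝕜 E] [NormedAddCommGroup F] [NormedSpace 𝕜 F]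
    [NormedAddCommGroup G] [NormedSpace 𝕜 G] (f : E →ₗ[𝕜] F) (g : E →ₗ[𝕜] G)
    (hfg : ∀ x, ‖g x‖ = ‖f x‖) :
    ∃ φ : LinearMap.range f →ₗᵢ[𝕜] G, ∀ x, φ ⟨f x, LinearMap.mem_range_self f x⟩ = g x := by
  have hker : LinearMap.ker f ≤ LinearMap.ker g := fun x hx => by
    rw [LinearMap.mem_ker, ← norm_eq_zero, hfg, norm_eq_zero]; exact hx
  set φ := (LinearMap.ker f).liftQ g hker ∘ₗ f.quotKerEquivRange.symm.toLinearMap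
  have hφ : ∀ x, φ ⟨f x, LinearMap.mem_range_self f x⟩ = g x := fun x => by simp [φ]
  refine ⟨⟨φ, ?_⟩, hφ⟩
  rintro ⟨-, x, rfl⟩
  simpa [hφ] using hfg x

theorem Submodule.exists_linearIsometry_topologicalClosure_extension {𝕜 E F : Type*}
    [NontriviallyNormedField 𝕜] [NormedAddCommGroup E] [NormedSpace 𝕜 E]
    [NormedAddCommGroup F] [NormedSpace 𝕜 F] [CompleteSpace F] {M : Submodule 𝕜 E}
    (φ : M →ₗᵢ[𝕜] F) :
    ∃ ψ : M.topologicalClosure →ₗᵢ[𝕜] F,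
      ∀ m : M, ψ (Submodule.inclusion M.le_topologicalClosure m) = φ m := by
  let j : M →ₗᵢ[𝕜] M.topologicalClosure :=
    ⟨Submodule.inclusion M.le_topologicalClosure, fun _ => rfl⟩
  have hdense : DenseRange j := (denseRange_inclusion_iff M.le_topologicalClosure).mpr
    (M.topologicalClosure_coe ▸ subset_rfl)
  set ψ := φ.toContinuousLinearMap.extend j.toContinuousLinearMap
  have hψ : ∀ m, ψ (j m) = φ m :=
    φ.toContinuousLinearMap.extend_eq hdense j.isometry.isUniformInducing
  have hnorm : (fun n => ‖ψ n‖) = fun n => ‖n‖ :=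
    hdense.equalizer (by fun_prop) (by fun_prop) (funext fun m => by simp [hψ]; rfl)
  exact ⟨⟨ψ, congrFun hnorm⟩, hψ⟩

section Modulus

lemma oMod_nonneg (S : H →L[ℂ] H) : 0 ≤ oMod S := CFC.sqrt_nonneg _

lemma oMod_isSelfAdjoint (S : H →L[ℂ] H) : IsSelfAdjoint (oMod S) :=
  (oMod_nonneg S).isSelfAdjoint

lemma oMod_mul_self (S : H →L[ℂ] H) : oMod S * oMod S = adjoint S * S :=
  CFC.sqrt_mul_sqrt_self _ (by simpa [star_eq_adjoint] using star_mul_self_nonneg S)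

lemma norm_oMod_apply (S : H →L[ℂ] H) (x : H) : ‖oMod S x‖ = ‖S x‖ := by
  have h : ⟪oMod S x, oMod S x⟫_ℂ = ⟪S x, S x⟫_ℂ := by
    rw [← adjoint_inner_right, (oMod_isSelfAdjoint S).adjoint_eq, ← mul_apply_eq_comp,
      oMod_mul_self, mul_apply_eq_comp, adjoint_inner_right]
  rw [inner_self_eq_norm_sq_to_K, inner_self_eq_norm_sq_to_K] at h
  exact (pow_left_inj₀ (norm_nonneg _) (norm_nonneg _) two_ne_zero).mp (by exact_mod_cast h)

lemma ker_oMod (S : H →L[ℂ] H) :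
    LinearMap.ker (oMod S : H →ₗ[ℂ] H) = LinearMap.ker (S : H →ₗ[ℂ] H) := by
  ext x
  simp only [LinearMap.mem_ker, coe_coe, ← norm_eq_zero (a := oMod S x), norm_oMod_apply,
    norm_eq_zero]

lemma norm_oMod (S : H →L[ℂ] H) : ‖oMod S‖ = ‖S‖ := by
  have h : ‖oMod S‖ * ‖oMod S‖ = ‖S‖ * ‖S‖ := by
    rw [← CStarRing.norm_star_mul_self, ← CStarRing.norm_star_mul_self (x := S),
      (oMod_isSelfAdjoint S).star_eq, oMod_mul_self, star_eq_adjoint]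
  nlinarith [norm_nonneg (oMod S), norm_nonneg S]

end Modulus

section Power

variable {P : H →L[ℂ] H}

lemma oPow_add (hP : 0 ≤ P) {s t : ℝ} (hs : 0 ≤ s) (ht : 0 ≤ t) :
    oPow P (s + t) = oPow P s * oPow P t := by
  rw [oPow, oPow, oPow, ← cfc_mul _ _ _ (Real.continuous_rpow_const hs).continuousOn
    (Real.continuous_rpow_const ht).continuousOn]
  exact cfc_congr fun x hx => Real.rpow_add_of_nonneg (spectrum_nonneg_of_nonneg hP hx) hs ht

lemma oPow_one (hP : 0 ≤ P) : oPow P 1 = P := by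
  simp only [oPow, Real.rpow_one]
  exact cfc_id' ℝ P hP.isSelfAdjoint

lemma norm_oPow_le (hP : 0 ≤ P) {r : ℝ} (hr : 0 ≤ r) : ‖oPow P r‖ ≤ ‖P‖ ^ r := by
  refine norm_cfc_le (Real.rpow_nonneg (norm_nonneg _) r) fun x hx => ?_
  have hx0 : 0 ≤ x := spectrum_nonneg_of_nonneg hP hx
  rw [Real.norm_of_nonneg (Real.rpow_nonneg hx0 r)]
  exact Real.rpow_le_rpow hx0 ((le_algebraMap_iff_spectrum_le hP.isSelfAdjoint).mp
    hP.isSelfAdjoint.le_algebraMap_norm_self x hx) hr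

end Power

section NumericalRadius

omit [CompleteSpace H]

lemma norm_inner_apply_self_le (S : H →L[ℂ] H) (x : H) : ‖⟪S x, x⟫_ℂ‖ ≤ ‖S‖ * ‖x‖ ^ 2 :=
  calc ‖⟪S x, x⟫_ℂ‖ ≤ ‖S x‖ * ‖x‖ := norm_inner_le_norm _ _
    _ ≤ ‖S‖ * ‖x‖ * ‖x‖ := by gcongr; exact S.le_opNorm x
    _ = ‖S‖ * ‖x‖ ^ 2 := by ring

lemma numRadius_bddAbove (S : H →L[ℂ] H) :
    BddAbove {r : ℝ | ∃ x : H, ‖x‖ = 1 ∧ r = ‖⟪S x, x⟫_ℂ‖} :=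
  ⟨‖S‖, by rintro r ⟨x, hx, rfl⟩; simpa [hx] using norm_inner_apply_self_le S x⟩

lemma numRadius_nonneg (S : H →L[ℂ] H) : 0 ≤ numRadius S :=
  Real.sSup_nonneg (by rintro r ⟨x, -, rfl⟩; positivity)

lemma numRadius_le_norm (S : H →L[ℂ] H) : numRadius S ≤ ‖S‖ :=
  Real.sSup_le (by rintro r ⟨x, hx, rfl⟩; simpa [hx] using norm_inner_apply_self_le S x)
    (norm_nonneg S)

lemma norm_inner_apply_self_le_numRadius (S : H →L[ℂ] H) (x : H) :
    ‖⟪S x, x⟫_ℂ‖ ≤ numRadius S * ‖x‖ ^ 2 := by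
  rcases eq_or_ne x 0 with rfl | hx
  · simp
  have hx₀ : 0 < ‖x‖ := norm_pos_iff.mpr hx
  have hu : ‖((‖x‖⁻¹ : ℝ) : ℂ) • x‖ = 1 := by
    rw [norm_smul, Complex.norm_real, norm_inv, norm_norm, inv_mul_cancel₀ hx₀.ne']
  have h := le_csSup (numRadius_bddAbove S) ⟨_, hu, rfl⟩
  rw [map_smul, inner_smul_left, inner_smul_right, norm_mul, norm_mul, RCLike.norm_conj,
    Complex.norm_real, norm_inv, norm_norm] at h
  rwa [← mul_assoc, ← mul_inv, ← sq, inv_mul_le_iff₀ (by positivity), mul_comm] at h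

end NumericalRadius

lemma norm_le_numRadius_of_mem_spectrum {S : H →L[ℂ] H} {z : ℂ} (hz : z ∈ spectrum ℂ S) :
    ‖z‖ ≤ numRadius S := by
  by_contra! h
  refine spectrum.mem_iff.mp hz <| isUnit_of_forall_le_norm_inner_map _
    (c := ⟨‖z‖ - numRadius S, by linarith⟩) (sub_pos.mpr h) fun x => ?_
  have hinner : ⟪(algebraMap ℂ (H →L[ℂ] H) z - S) x, x⟫_ℂ =
      starRingEnd ℂ z * (‖x‖ : ℂ) ^ 2 - ⟪S x, x⟫_ℂ := by
    simp [Algebra.algebraMap_eq_smul_one, inner_self_eq_norm_sq_to_K, mul_comm]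
  calc ‖x‖ ^ 2 * (‖z‖ - numRadius S)
      = ‖starRingEnd ℂ z * (‖x‖ : ℂ) ^ 2‖ - numRadius S * ‖x‖ ^ 2 := by simp; ring
    _ ≤ ‖starRingEnd ℂ z * (‖x‖ : ℂ) ^ 2‖ - ‖⟪S x, x⟫_ℂ‖ := by
        gcongr; exact norm_inner_apply_self_le_numRadius S x
    _ ≤ _ := by rw [hinner]; exact norm_sub_norm_le _ _

lemma spectralRadius_le_ofReal_numRadius (S : H →L[ℂ] H) :
    spectralRadius ℂ S ≤ ENNReal.ofReal (numRadius S) :=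
  iSup₂_le fun _ hz => by
    rw [← ENNReal.ofReal_coe_nnreal, coe_nnnorm]
    exact ENNReal.ofReal_le_ofReal (norm_le_numRadius_of_mem_spectrum hz)

lemma IsPartialIsometry.norm_apply_le {V : H →L[ℂ] H} (hV : IsPartialIsometry V) (x : H) :
    ‖V x‖ ≤ ‖x‖ := by
  set K := LinearMap.ker (V : H →ₗ[ℂ] H)
  have : CompleteSpace K := (isClosed_ker V).completeSpace_coe
  have hVx : V x = V (Kᗮ.starProjection x) := by
    conv_lhs => rw [← K.starProjection_add_starProjection_orthogonal x]
    rw [map_add, show V (K.starProjection x) = 0 from K.starProjection_apply_mem x, zero_add]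
  rw [hVx, hV _ (Kᗮ.starProjection_apply_mem x)]
  exact Kᗮ.norm_starProjection_apply_le x

lemma IsPartialIsometry.norm_le_one {V : H →L[ℂ] H} (hV : IsPartialIsometry V) : ‖V‖ ≤ 1 :=
  opNorm_le_bound V zero_le_one fun x => by simpa using hV.norm_apply_le x

section PolarDecomposition

omit [CompleteSpace H]

variable (N : Submodule ℂ H) [N.HasOrthogonalProjection] (ψ : N →ₗᵢ[ℂ] H)

lemma ker_linearIsometry_comp_orthogonalProjection :
    LinearMap.ker ((ψ.toContinuousLinearMap ∘L N.orthogonalProjectionOnto : H →L[ℂ] H) :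
      H →ₗ[ℂ] H) = Nᗮ := by
  ext x
  simp [← Submodule.orthogonalProjectionOnto_eq_zero_iff, map_eq_zero_iff ψ ψ.injective]

lemma isPartialIsometry_linearIsometry_comp_orthogonalProjection :
    IsPartialIsometry (ψ.toContinuousLinearMap ∘L N.orthogonalProjectionOnto) := by
  intro x hx
  rw [ker_linearIsometry_comp_orthogonalProjection, Submodule.orthogonal_orthogonal] at hx
  simp [Submodule.orthogonalProjectionOnto_mem_subspace_eq_self (⟨x, hx⟩ : N)]

end PolarDecomposition

/-- `V` extends the isometry `|S| x ↦ S x` from `range |S|` to its closure and vanishes on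
`(range |S|)ᗮ = ker S`. -/
theorem exists_isPolarDecomp (S : H →L[ℂ] H) : ∃ V : H →L[ℂ] H, IsPolarDecomp S V := by
  set M := LinearMap.range (oMod S : H →ₗ[ℂ] H)
  obtain ⟨φ, hφ⟩ := LinearMap.exists_linearIsometry_range_comp (oMod S : H →ₗ[ℂ] H)
    (S : H →ₗ[ℂ] H) fun x => (norm_oMod_apply S x).symm
  obtain ⟨ψ, hψ⟩ := Submodule.exists_linearIsometry_topologicalClosure_extension φ
  have : CompleteSpace M.topologicalClosure := M.isClosed_topologicalClosure.completeSpace_coe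
  have hperp : M.topologicalClosureᗮ = LinearMap.ker (S : H →ₗ[ℂ] H) := by
    rw [Submodule.orthogonal_closure, ← ker_oMod, ← (oMod_isSelfAdjoint S).adjoint_eq]
    exact orthogonal_range (oMod S)
  refine ⟨ψ.toContinuousLinearMap ∘L M.topologicalClosure.orthogonalProjectionOnto,
    isPartialIsometry_linearIsometry_comp_orthogonalProjection _ ψ,
    (ker_linearIsometry_comp_orthogonalProjection _ ψ).trans hperp, ?_⟩
  ext x
  have hx : oMod S x ∈ M.topologicalClosure := M.le_topologicalClosure ⟨x, rfl⟩
  simp [Submodule.orthogonalProjectionOnto_mem_subspace_eq_self (⟨_, hx⟩ : M.topologicalClosure)]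
  exact (hφ x).symm.trans (hψ _).symm

section Aluthge

variable {S V : H →L[ℂ] H} {l : ℝ}

lemma spectralRadius_aluthge (hSV : IsPolarDecomp S V) (hl₀ : 0 ≤ l) (hl₁ : l ≤ 1) :
    spectralRadius ℂ (aluthge l S V) = spectralRadius ℂ S := by
  rw [aluthge, mul_assoc, spectralRadius_mul_comm, mul_assoc,
    ← oPow_add (oMod_nonneg S) (sub_nonneg.mpr hl₁) hl₀, sub_add_cancel,
    oPow_one (oMod_nonneg S), ← hSV.2.2]

lemma norm_aluthge_le (hSV : IsPolarDecomp S V) (hl₀ : 0 ≤ l) (hl₁ : l ≤ 1) :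
    ‖aluthge l S V‖ ≤ ‖S‖ := by
  have hP := oMod_nonneg S
  calc ‖aluthge l S V‖ ≤ ‖oPow (oMod S) l‖ * ‖V‖ * ‖oPow (oMod S) (1 - l)‖ := norm_mul₃_le
    _ ≤ ‖S‖ ^ l * 1 * ‖S‖ ^ (1 - l) := by
        rw [← norm_oMod S]
        gcongr
        exacts [norm_oPow_le hP hl₀, hSV.1.norm_le_one, norm_oPow_le hP (sub_nonneg.mpr hl₁)]
    _ = ‖S‖ := by
        rw [mul_one, ← Real.rpow_add' (norm_nonneg _) (by norm_num), add_sub_cancel,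
          Real.rpow_one]

lemma spectralRadius_le_ofReal_numRadius_aluthge_conj {T : H →L[ℂ] H} {X : (H →L[ℂ] H)ˣ}
    (hV : IsPolarDecomp ((X : H →L[ℂ] H) * T * (↑X⁻¹ : H →L[ℂ] H)) V) (hl₀ : 0 ≤ l)
    (hl₁ : l ≤ 1) :
    spectralRadius ℂ T ≤
      ENNReal.ofReal (numRadius (aluthge l ((X : H →L[ℂ] H) * T * (↑X⁻¹ : H →L[ℂ] H)) V)) :=
  calc spectralRadius ℂ T = spectralRadius ℂ ((X : H →L[ℂ] H) * T * (↑X⁻¹ : H →L[ℂ] H)) := by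
        rw [spectralRadius, spectralRadius, spectrum.units_conjugate]
    _ = spectralRadius ℂ (aluthge l ((X : H →L[ℂ] H) * T * (↑X⁻¹ : H →L[ℂ] H)) V) :=
        (spectralRadius_aluthge hV hl₀ hl₁).symm
    _ ≤ _ := spectralRadius_le_ofReal_numRadius _

end Aluthge

/-- `r(T) = inf { w(Δ_λ(X T X⁻¹)) : X invertible }`. -/
theorem spectralRadius_eq_inf_numRadius_aluthge_conj
    (T : H →L[ℂ] H) (l : ℝ) (hl : l ∈ Set.Ioo (0 : ℝ) 1) :
    (spectralRadius ℂ T).toReal =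
      sInf {r : ℝ | ∃ X : (H →L[ℂ] H)ˣ, ∃ V : H →L[ℂ] H,
        IsPolarDecomp ((X : H →L[ℂ] H) * T * (↑X⁻¹ : H →L[ℂ] H)) V ∧
        r = numRadius (aluthge l ((X : H →L[ℂ] H) * T * (↑X⁻¹ : H →L[ℂ] H)) V)} := by
  obtain ⟨V₁, hV₁⟩ := exists_isPolarDecomp
    (((1 : (H →L[ℂ] H)ˣ) : H →L[ℂ] H) * T * (↑(1 : (H →L[ℂ] H)ˣ)⁻¹ : H →L[ℂ] H))
  have hfin : spectralRadius ℂ T ≠ ⊤ := ne_top_of_le_ne_top ENNReal.ofReal_ne_top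
    (spectralRadius_le_ofReal_numRadius_aluthge_conj hV₁ hl.1.le hl.2.le)
  refine le_antisymm (le_csInf ⟨_, 1, V₁, hV₁, rfl⟩ ?_) (le_of_forall_pos_le_add fun ε hε => ?_)
  · rintro r ⟨X, V, hV, rfl⟩
    exact ENNReal.toReal_le_of_le_ofReal (numRadius_nonneg _)
      (spectralRadius_le_ofReal_numRadius_aluthge_conj hV hl.1.le hl.2.le)
  obtain ⟨X, hX⟩ := exists_units_norm_conj_le (a := T) (c := (spectralRadius ℂ T).toReal + ε)
    ((ENNReal.lt_ofReal_iff_toReal_lt hfin).mpr (lt_add_of_pos_right _ hε))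
  obtain ⟨V, hV⟩ := exists_isPolarDecomp ((X : H →L[ℂ] H) * T * (↑X⁻¹ : H →L[ℂ] H))
  refine le_trans (csInf_le ⟨0, ?_⟩ ⟨X, V, hV, rfl⟩) ?_
  · rintro r ⟨X, V, -, rfl⟩
    exact numRadius_nonneg _
  exact (numRadius_le_norm _).trans ((norm_aluthge_le hV hl.1.le hl.2.le).trans hX)
end

section
/- Let H be a complex Hilbert space and T a bounded linear operator on H. Then the spectral radius of T satisfies r(T) = inf { ‖X T X⁻¹‖ : X a bounded invertible operator on H } = inf { ‖e^A T e^{-A}‖ : A a bounded self-adjoint operator on H }. -/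
open ContinuousLinearMap Filter

variable {H : Type*} [NormedAddCommGroup H] [InnerProductSpace ℂ H] [CompleteSpace H]

/-!
Conjugation does not change the spectrum, so `r(T) ≤ ‖X T X⁻¹‖`. Conversely (Rota), if
`∑ ‖Sⁿ‖² < ∞` then `Y = ∑ (Sⁿ)* Sⁿ` satisfies `S* Y S = Y - 1`, hence `Y ≥ 1`; writing
`Y^{1/2} = e^H` with `H = log Y^{1/2}` self-adjoint gives
`(e^H S e^{-H})* (e^H S e^{-H}) = e^{-H} (Y - 1) e^{-H} ≤ e^{-H} Y e^{-H} = 1`, i.e.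
`‖e^H S e^{-H}‖ ≤ 1`. By Gelfand's formula `S = T / t` qualifies for every `t > r(T)`.
-/

open NormedSpace ENNReal

section ComplexBanachAlgebra

variable {A : Type*} [NormedRing A] [NormedAlgebra ℂ A] [CompleteSpace A]

theorem exp_add_of_commute_of_complex {x y : A} (hxy : Commute x y) :
    exp (x + y) = exp x * exp y := by
  let +nondep : NormedAlgebra ℚ A := .restrictScalars ℚ ℂ A
  exact exp_add_of_commute hxy

theorem exp_mul_exp_neg (x : A) : exp x * exp (-x) = 1 := by
  rw [← exp_add_of_commute_of_complex (Commute.refl x).neg_right, add_neg_cancel, exp_zero]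

theorem exp_neg_mul_exp (x : A) : exp (-x) * exp x = 1 := by
  rw [← exp_add_of_commute_of_complex (Commute.refl x).neg_left, neg_add_cancel, exp_zero]

noncomputable def expUnit (x : A) : Aˣ :=
  ⟨exp x, exp (-x), exp_mul_exp_neg x, exp_neg_mul_exp x⟩

theorem eventually_norm_pow_le_pow_of_spectralRadius_lt (a : A) {q : ℝ}
    (hq : spectralRadius ℂ a < ENNReal.ofReal q) : ∀ᶠ n in atTop, ‖a ^ n‖ ≤ q ^ n := by
  have hq0 : 0 < q := ENNReal.ofReal_pos.mp (pos_of_gt hq)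
  filter_upwards [eventually_ne_atTop 0,
    (spectrum.pow_norm_pow_one_div_tendsto_nhds_spectralRadius a).eventually_lt_const hq]
    with n hn0 hn
  rw [ENNReal.ofReal_lt_ofReal_iff hq0] at hn
  calc ‖a ^ n‖ = (‖a ^ n‖ ^ (1 / n : ℝ)) ^ n := by
        rw [one_div, Real.rpow_inv_natCast_pow (norm_nonneg _) hn0]
    _ ≤ q ^ n := by gcongr

theorem summable_norm_smul_pow_sq_of_spectralRadius_lt (a : A) {t : ℝ}
    (ht : spectralRadius ℂ a < ENNReal.ofReal t) : Summable fun n ↦ ‖(t⁻¹ • a) ^ n‖ ^ 2 := by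
  obtain ⟨q, hrq, hqt⟩ := exists_between ht
  have ht0 : 0 < t := ENNReal.ofReal_pos.mp (pos_of_gt ht)
  refine Summable.of_norm_bounded_eventually_nat
    (summable_geometric_of_lt_one (r := (q.toReal / t) ^ 2) (by positivity) ?_) ?_
  · rw [sq_lt_one_iff₀ (by positivity), div_lt_one ht0]
    exact ENNReal.toReal_lt_of_lt_ofReal hqt
  · have hrq' : spectralRadius ℂ a < ENNReal.ofReal q.toReal := by
      rwa [ENNReal.ofReal_toReal hqt.ne_top]
    filter_upwards [eventually_norm_pow_le_pow_of_spectralRadius_lt a hrq'] with n hn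
    rw [Real.norm_of_nonneg (by positivity), smul_pow, norm_smul, norm_pow, norm_inv,
      Real.norm_of_nonneg ht0.le]
    calc ((t⁻¹) ^ n * ‖a ^ n‖) ^ 2 ≤ ((t⁻¹) ^ n * q.toReal ^ n) ^ 2 := by gcongr
      _ = ((q.toReal / t) ^ 2) ^ n := by ring

end ComplexBanachAlgebra

section StarRing

variable {R : Type*} [Ring R] [StarRing R] [TopologicalSpace R] [IsTopologicalRing R]
  [T2Space R]

theorem star_mul_tsum_star_pow_mul_pow_mul (a : R) (h : Summable fun n ↦ star (a ^ n) * a ^ n) :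
    star a * (∑' n, star (a ^ n) * a ^ n) * a = (∑' n, star (a ^ n) * a ^ n) - 1 := by
  calc star a * (∑' n, star (a ^ n) * a ^ n) * a
      = ∑' n, star a * (star (a ^ n) * a ^ n) * a := by
        rw [← h.tsum_mul_left, ← (h.mul_left _).tsum_mul_right]
    _ = ∑' n, star (a ^ (n + 1)) * a ^ (n + 1) := by simp only [pow_succ, star_mul, mul_assoc]
    _ = (∑' n, star (a ^ n) * a ^ n) - 1 := by rw [h.tsum_eq_zero_add]; simp

end StarRing

section CStarAlgebra

variable {A : Type*} [CStarAlgebra A]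

theorem CStarRing.spectralRadius_le_nnnorm (a : A) : spectralRadius ℂ a ≤ ‖a‖₊ := by
  nontriviality A
  exact spectrum.spectralRadius_le_nnnorm a

theorem spectralRadius_toReal_le_norm_units_conj (a : A) (u : Aˣ) :
    (spectralRadius ℂ a).toReal ≤ ‖(u : A) * a * ↑u⁻¹‖ := by
  calc (spectralRadius ℂ a).toReal = (spectralRadius ℂ ((u : A) * a * ↑u⁻¹)).toReal := by
        rw [spectralRadius, spectralRadius, spectrum.units_conjugate]
    _ ≤ (‖(u : A) * a * ↑u⁻¹‖₊ : ℝ≥0∞).toReal :=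
        ENNReal.toReal_mono ENNReal.coe_ne_top (CStarRing.spectralRadius_le_nnnorm _)
    _ = ‖(u : A) * a * ↑u⁻¹‖ := rfl

variable [PartialOrder A] [StarOrderedRing A]

theorem CStarAlgebra.norm_le_one_of_star_mul_self_le_one {b : A} (h : star b * b ≤ 1) :
    ‖b‖ ≤ 1 := by
  rw [← CStarAlgebra.norm_le_one_iff_of_nonneg (star b * b), CStarRing.norm_star_mul_self] at h
  nlinarith [norm_nonneg b]

theorem exists_isSelfAdjoint_norm_exp_conj_le_one {a : A} (ha : Summable fun n ↦ ‖a ^ n‖ ^ 2) :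
    ∃ h : A, IsSelfAdjoint h ∧ ‖exp h * a * exp (-h)‖ ≤ 1 := by
  have hsum : Summable fun n ↦ star (a ^ n) * a ^ n :=
    .of_norm (by simpa only [CStarRing.norm_star_mul_self, sq] using ha)
  set y := ∑' n, star (a ^ n) * a ^ n
  have hy : star a * y * a = y - 1 := star_mul_tsum_star_pow_mul_pow_mul a hsum
  have hy0 : 0 ≤ y := tsum_nonneg fun n ↦ star_mul_self_nonneg _
  have hy1 : 1 ≤ y := sub_nonneg.1 (hy ▸ star_left_conjugate_nonneg hy0 a)
  set h : A := CFC.log (CFC.sqrt y)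
  have hu : exp h = CFC.sqrt y := CFC.exp_log _ (isStrictlyPositive_one.of_le hy1).sqrt
  have hu_sa : IsSelfAdjoint (exp h) := IsSelfAdjoint.log.exp_nonneg.isSelfAdjoint
  have hv : IsSelfAdjoint (exp (-h)) := IsSelfAdjoint.log.neg.exp_nonneg.isSelfAdjoint
  have hvuuv : exp (-h) * (exp h * exp h) * exp (-h) = 1 := by
    rw [← mul_assoc, exp_neg_mul_exp, one_mul, exp_mul_exp_neg]
  refine ⟨h, IsSelfAdjoint.log, CStarAlgebra.norm_le_one_of_star_mul_self_le_one ?_⟩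
  calc star (exp h * a * exp (-h)) * (exp h * a * exp (-h))
      = exp (-h) * (star a * (exp h * exp h) * a) * exp (-h) := by
        simp only [star_mul, hu_sa.star_eq, hv.star_eq, mul_assoc]
    _ = exp (-h) * (y - 1) * exp (-h) := by rw [hu, CFC.sqrt_mul_sqrt_self y, hy]
    _ ≤ exp (-h) * y * exp (-h) := hv.conjugate_le_conjugate (sub_le_self _ zero_le_one)
    _ = 1 := by rw [← hvuuv, hu, CFC.sqrt_mul_sqrt_self y]

theorem exists_isSelfAdjoint_norm_exp_conj_lt (a : A) {s : ℝ}
    (hs : (spectralRadius ℂ a).toReal < s) :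
    ∃ h : A, IsSelfAdjoint h ∧ ‖exp h * a * exp (-h)‖ < s := by
  obtain ⟨t, hrt, hts⟩ := exists_between hs
  have ht0 : 0 < t := ENNReal.toReal_nonneg.trans_lt hrt
  have hr_top : spectralRadius ℂ a ≠ ⊤ :=
    ((CStarRing.spectralRadius_le_nnnorm a).trans_lt ENNReal.coe_lt_top).ne
  obtain ⟨h, hsa, hle⟩ := exists_isSelfAdjoint_norm_exp_conj_le_one
    (summable_norm_smul_pow_sq_of_spectralRadius_lt a
      ((ENNReal.lt_ofReal_iff_toReal_lt hr_top).2 hrt))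
  refine ⟨h, hsa, ?_⟩
  calc ‖exp h * a * exp (-h)‖ = t * ‖exp h * (t⁻¹ • a) * exp (-h)‖ := by
        rw [mul_smul_comm, smul_mul_assoc, norm_smul, Real.norm_of_nonneg (inv_nonneg.2 ht0.le),
          mul_inv_cancel_left₀ ht0.ne']
    _ ≤ t * 1 := by gcongr
    _ < s := by rwa [mul_one]

end CStarAlgebra

/-- `r(T) = inf { ‖X T X⁻¹‖ : X invertible } = inf { ‖e^A T e^{-A}‖ : A self-adjoint }`. -/
theorem spectralRadius_eq_inf_norm_conj (T : H →L[ℂ] H) :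
    (spectralRadius ℂ T).toReal =
        sInf {r : ℝ | ∃ X : (H →L[ℂ] H)ˣ,
          r = ‖(X : H →L[ℂ] H) * T * (↑X⁻¹ : H →L[ℂ] H)‖} ∧
      (spectralRadius ℂ T).toReal =
        sInf {r : ℝ | ∃ A : H →L[ℂ] H, IsSelfAdjoint A ∧
          r = ‖NormedSpace.exp A * T * NormedSpace.exp (-A)‖} := by
  constructor
  · refine (csInf_eq_of_forall_ge_of_forall_gt_exists_lt ?_ ?_ fun s hs ↦ ?_).symm
    · exact ⟨_, 1, rfl⟩
    · rintro _ ⟨u, rfl⟩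
      exact spectralRadius_toReal_le_norm_units_conj T u
    · obtain ⟨h, -, hlt⟩ := exists_isSelfAdjoint_norm_exp_conj_lt T hs
      exact ⟨_, ⟨expUnit h, rfl⟩, hlt⟩
  · refine (csInf_eq_of_forall_ge_of_forall_gt_exists_lt ?_ ?_ fun s hs ↦ ?_).symm
    · exact ⟨_, 0, .zero _, rfl⟩
    · rintro _ ⟨h, -, rfl⟩
      exact spectralRadius_toReal_le_norm_units_conj T (expUnit h)
    · obtain ⟨h, hsa, hlt⟩ := exists_isSelfAdjoint_norm_exp_conj_lt T hs
      exact ⟨_, ⟨h, hsa, rfl⟩, hlt⟩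
end
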